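/- For $x \in \mathbb{R}^3$ with $|x| > 8$, the integral $J(x) := \int_0^1 \int_{\mathbb{R}^3} \frac{1}{(|x-y| + \sqrt{1-s})^3} \cdot \frac{1}{(|y| + \sqrt{s})^3} \, dy \, ds$ satisfies $J(x) \le C |x|^{-3} \log |x|$ for an absolute constant $C$. -/

import Mathlib

open MeasureTheory Real
noncomputable section
abbrev E3 := EuclideanSpace ℝ (Fin 3)
/-- partial derivative in direction `j` -/
def pd (j : Fin 3) (f : E3 → ℝ) (x : E3) : ℝ := fderiv ℝ f x (EuclideanSpace.single j 1)
/-- divergence of a vector field -/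
def vdiv (v : E3 → E3) (x : E3) : ℝ := ∑ j, pd j (fun y => v y j) x
/-- componentwise Laplacian (on scalars) -/
def lap (f : E3 → ℝ) (x : E3) : ℝ := ∑ j, pd j (pd j f) x
/-- curl of a vector field on ℝ³ -/
def curl (v : E3 → E3) (x : E3) : E3 :=
  WithLp.toLp 2 ![pd 1 (fun y => v y 2) x - pd 2 (fun y => v y 1) x,
    pd 2 (fun y => v y 0) x - pd 0 (fun y => v y 2) x,
    pd 0 (fun y => v y 1) x - pd 1 (fun y => v y 0) x]
/-- Gaussian heat kernel with diffusivity `c` -/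
def heatKernel (c t : ℝ) (x : E3) : ℝ :=
  (4 * Real.pi * c * t) ^ (-(3:ℝ)/2) * Real.exp (-‖x‖^2 / (4 * c * t))
/-- the weak-`L^p` quasinorm on ℝ³ -/
def wnorm3 (p : ℝ) (g : E3 → ℝ) : ℝ :=
  sSup {a : ℝ | ∃ γ : ℝ, 0 < γ ∧ a = γ * (volume {x : E3 | γ < |g x|}).toReal ^ p⁻¹}

/-!
Fix `s` and put `a = √(1 - s)`, `b = √s`, `R = ‖x‖`. On `‖y‖ < R/2` the first factor of the
integrand is at most `(R/2)⁻³`, on `R/2 ≤ ‖y‖ < 2R` the second one is; in both cases the other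
factor is integrated over a ball of radius `O(R)`, where polar coordinates give
`∫_{‖y‖<ρ} (‖y‖ + c)⁻³ dy ≲ log ((ρ + c)/c)`. On `‖y‖ ≥ 2R` the integrand is `O(‖y‖⁻⁶)`, with
integral `O(R⁻³)`. With `log (1/c) ≤ 1/c` the inner integral is
`O(R⁻³ (log R + 1/√s + 1/√(1 - s)))`, and `1/√s`, `1/√(1 - s)` are integrable on `(0, 1)`.
-/

open Set Metric Module

lemma integral_Ioo_inv_add {c ρ : ℝ} (hc : 0 < c) (hρ : 0 ≤ ρ) :
    ∫ r in Ioo 0 ρ, (r + c)⁻¹ = log ((ρ + c) / c) := by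
  rw [← integral_Ioc_eq_integral_Ioo, ← intervalIntegral.integral_of_le hρ,
    intervalIntegral.integral_comp_add_right (fun r => r⁻¹), zero_add,
    integral_inv_of_pos hc (by positivity)]

lemma integrableOn_Ioo_inv_add {c : ℝ} (hc : 0 < c) (ρ : ℝ) :
    IntegrableOn (fun r => (r + c)⁻¹) (Ioo 0 ρ) :=
  (ContinuousOn.inv₀ (by fun_prop) fun r hr => by
    have : 0 ≤ r := hr.1; positivity).integrableOn_compact isCompact_Icc |>.mono_set
    Ioo_subset_Icc_self

lemma pow_pred_mul_inv_add_pow_le {c r : ℝ} (hc : 0 < c) (hr : 0 ≤ r) {n : ℕ} (hn : 0 < n) :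
    r ^ (n - 1) * ((r + c) ^ n)⁻¹ ≤ (r + c)⁻¹ := by
  have hrc : 0 < r + c := by positivity
  calc r ^ (n - 1) * ((r + c) ^ n)⁻¹ ≤ (r + c) ^ (n - 1) * ((r + c) ^ n)⁻¹ := by
        gcongr; linarith
    _ = (r + c)⁻¹ := by
        rw [pow_sub₀ _ hrc.ne' hn, pow_one]; field_simp

lemma pow_pred_mul_rpow_neg {r : ℝ} (hr : 0 < r) {n : ℕ} (hn : 0 < n) (p : ℝ) :
    r ^ (n - 1) * r ^ (-p) = r ^ ((n : ℝ) - 1 - p) := by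
  rw [← rpow_natCast, Nat.cast_sub hn, Nat.cast_one, ← rpow_add hr, sub_eq_add_neg _ p]

lemma pow_smul_indicator (n : ℕ) (s : Set ℝ) (g : ℝ → ℝ) :
    (fun r : ℝ => r ^ n • s.indicator g r) = s.indicator fun r => r ^ n * g r :=
  funext fun _ => (indicator_mul_right s (· ^ n) g).symm

lemma one_le_log_of_four_le {R : ℝ} (hR : 4 ≤ R) : 1 ≤ log R := by
  rw [le_log_iff_exp_le (by positivity)]
  linarith [exp_one_lt_d9]

lemma log_div_le_log_add_inv {u c : ℝ} (hu : 0 < u) (hc : 0 < c) :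
    log (u / c) ≤ log u + c⁻¹ := by
  rw [log_div hu.ne' hc.ne', sub_eq_add_neg, ← log_inv]
  linarith [log_le_sub_one_of_pos (inv_pos.2 hc)]

lemma log_div_add_log_div_le {R a b : ℝ} (hR : 4 ≤ R) (ha : 0 < a) (ha1 : a ≤ 1) (hb : 0 < b)
    (hb1 : b ≤ 1) :
    log ((R / 2 + b) / b) + log ((3 * R + a) / a) ≤ 3 * log R + a⁻¹ + b⁻¹ := by
  have h₁ : log (R / 2 + b) ≤ log R := log_le_log (by positivity) (by linarith)
  have h₂ : log (3 * R + a) ≤ 2 * log R :=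
    calc log (3 * R + a) ≤ log (R ^ 2) := log_le_log (by positivity) (by nlinarith)
      _ = 2 * log R := by rw [log_pow, Nat.cast_ofNat]
  linarith [log_div_le_log_add_inv (by positivity : 0 < R / 2 + b) hb,
    log_div_le_log_add_inv (by positivity : 0 < 3 * R + a) ha]

lemma intervalIntegrable_inv_sqrt : IntervalIntegrable (fun s => (√s)⁻¹) volume 0 1 := by
  refine (intervalIntegral.intervalIntegrable_rpow' (r := -(1 / 2)) (by norm_num)).congr
    fun s hs => ?_
  rw [uIoc_of_le zero_le_one] at hs
  simp only [sqrt_eq_rpow, rpow_neg hs.1.le]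

lemma integrableOn_inv_sqrt_add_inv_sqrt_one_sub :
    IntegrableOn (fun s => (√(1 - s))⁻¹ + (√s)⁻¹) (Ioo 0 1) := by
  have h := intervalIntegrable_inv_sqrt
  have h' := (h.comp_sub_left 1).symm
  simp only [sub_zero, sub_self] at h'
  exact (intervalIntegrable_iff_integrableOn_Ioo_of_le zero_le_one).1 (h'.add h)

section Seminormed

variable {E : Type*} [SeminormedAddCommGroup E]

lemma ball_zero_indicator_comp_norm (g : ℝ → ℝ) (ρ : ℝ) :
    (ball (0 : E) ρ).indicator (fun y => g ‖y‖) = fun y => (Iio ρ).indicator g ‖y‖ := by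
  ext y; simp [indicator]

lemma compl_ball_zero_indicator_comp_norm (g : ℝ → ℝ) (ρ : ℝ) :
    (ball (0 : E) ρ)ᶜ.indicator (fun y => g ‖y‖) = fun y => (Ici ρ).indicator g ‖y‖ := by
  ext y; simp [indicator]

lemma inv_norm_sub_add_pow_mul_le_of_two_mul_le {x y : E} (hx : 0 < ‖x‖) (hy : 2 * ‖x‖ ≤ ‖y‖)
    {a b : ℝ} (ha : 0 ≤ a) (hb : 0 ≤ b) (n : ℕ) :
    ((‖x - y‖ + a) ^ n)⁻¹ * ((‖y‖ + b) ^ n)⁻¹ ≤ 2 ^ n * ‖y‖ ^ (-(2 * n : ℝ)) := by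
  have hy0 : 0 < ‖y‖ := by linarith
  have hyx : ‖y‖ - ‖x‖ ≤ ‖x - y‖ := norm_sub_rev x y ▸ norm_sub_norm_le y x
  have hfar : ((‖x - y‖ + a) ^ n)⁻¹ ≤ 2 ^ n * (‖y‖ ^ n)⁻¹ :=
    calc ((‖x - y‖ + a) ^ n)⁻¹ ≤ ((‖y‖ / 2) ^ n)⁻¹ := by gcongr; linarith
      _ = 2 ^ n * (‖y‖ ^ n)⁻¹ := by rw [div_pow, inv_div, div_eq_mul_inv]
  have hnear : ((‖y‖ + b) ^ n)⁻¹ ≤ (‖y‖ ^ n)⁻¹ := by gcongr; linarith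
  calc ((‖x - y‖ + a) ^ n)⁻¹ * ((‖y‖ + b) ^ n)⁻¹ ≤ 2 ^ n * (‖y‖ ^ n)⁻¹ * (‖y‖ ^ n)⁻¹ := by
        gcongr
    _ = 2 ^ n * ‖y‖ ^ (-(2 * n : ℝ)) := by
        rw [rpow_neg hy0.le, show (2 * n : ℝ) = ((2 * n : ℕ) : ℝ) by push_cast; ring,
          rpow_natCast, two_mul, pow_add, mul_inv, mul_assoc]

lemma inv_norm_sub_add_pow_mul_le {x : E} (hx : 0 < ‖x‖)
    (y : E) {a b : ℝ} (ha : 0 ≤ a) (hb : 0 ≤ b) (n : ℕ) :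
    ((‖x - y‖ + a) ^ n)⁻¹ * ((‖y‖ + b) ^ n)⁻¹ ≤
      ((‖x‖ / 2) ^ n)⁻¹ * ((ball 0 (‖x‖ / 2)).indicator (fun y => ((‖y‖ + b) ^ n)⁻¹) y
        + (ball 0 (3 * ‖x‖)).indicator (fun z => ((‖z‖ + a) ^ n)⁻¹) (x - y))
      + 2 ^ n * (ball 0 (2 * ‖x‖))ᶜ.indicator (fun y => ‖y‖ ^ (-(2 * n : ℝ))) y := by
  set R := ‖x‖
  have hk : 0 ≤ ((R / 2) ^ n)⁻¹ := by positivity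
  have h₁ : 0 ≤ (ball 0 (R / 2)).indicator (fun y : E => ((‖y‖ + b) ^ n)⁻¹) y :=
    indicator_nonneg (fun _ _ => by positivity) y
  have h₂ : 0 ≤ (ball 0 (3 * R)).indicator (fun z : E => ((‖z‖ + a) ^ n)⁻¹) (x - y) :=
    indicator_nonneg (fun _ _ => by positivity) _
  have h₃ : 0 ≤ 2 ^ n * (ball 0 (2 * R))ᶜ.indicator (fun y : E => ‖y‖ ^ (-(2 * n : ℝ))) y :=
    mul_nonneg (by positivity) (indicator_nonneg (fun _ _ => by positivity) y)
  have hxy : R - ‖y‖ ≤ ‖x - y‖ := norm_sub_norm_le x y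
  rcases lt_or_ge ‖y‖ (R / 2) with hy | hy
  · rw [indicator_of_mem (mem_ball_zero_iff.2 hy : y ∈ ball (0 : E) (R / 2))] at h₁ ⊢
    have : ((‖x - y‖ + a) ^ n)⁻¹ ≤ ((R / 2) ^ n)⁻¹ := by gcongr; linarith
    linarith [mul_le_mul_of_nonneg_right this (by positivity : 0 ≤ ((‖y‖ + b) ^ n)⁻¹),
      mul_nonneg hk h₂]
  rcases lt_or_ge ‖y‖ (2 * R) with hy' | hy'
  · have hmem : x - y ∈ ball (0 : E) (3 * R) :=
      mem_ball_zero_iff.2 (by linarith [norm_sub_le x y])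
    rw [indicator_of_mem hmem] at h₂ ⊢
    have : ((‖y‖ + b) ^ n)⁻¹ ≤ ((R / 2) ^ n)⁻¹ := by gcongr; linarith
    linarith [mul_le_mul_of_nonneg_left this (by positivity : 0 ≤ ((‖x - y‖ + a) ^ n)⁻¹),
      mul_nonneg hk h₁]
  · rw [indicator_of_mem (by simpa using hy' : y ∈ (ball (0 : E) (2 * R))ᶜ)]
    linarith [inv_norm_sub_add_pow_mul_le_of_two_mul_le hx hy' ha hb n,
      mul_nonneg hk (add_nonneg h₁ h₂)]

end Seminormed

section AddHaar

variable {E : Type*} [NormedAddCommGroup E] [NormedSpace ℝ E] [FiniteDimensional ℝ E]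
  [MeasurableSpace E] [BorelSpace E] (μ : Measure E) [μ.IsAddHaarMeasure]

lemma integrableOn_ball_inv_norm_add_pow {c : ℝ} (hc : 0 < c) (n : ℕ) (ρ : ℝ) :
    IntegrableOn (fun y : E => ((‖y‖ + c) ^ n)⁻¹) (ball 0 ρ) μ := by
  refine Measure.integrableOn_of_bounded (M := (c ^ n)⁻¹) measure_ball_lt_top.ne
    (by fun_prop) (ae_of_all _ fun y => ?_)
  rw [Real.norm_of_nonneg (by positivity)]
  gcongr
  exact le_add_of_nonneg_left (norm_nonneg y)

variable [Nontrivial E]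

lemma setIntegral_ball_fun_norm (g : ℝ → ℝ) (ρ : ℝ) :
    ∫ y in ball 0 ρ, g ‖y‖ ∂μ
      = finrank ℝ E * μ.real (ball 0 1) * ∫ r in Ioo 0 ρ, r ^ (finrank ℝ E - 1) * g r := by
  rw [← integral_indicator measurableSet_ball, ball_zero_indicator_comp_norm,
    integral_fun_norm_addHaar μ, pow_smul_indicator, setIntegral_indicator measurableSet_Iio,
    Ioi_inter_Iio, nsmul_eq_mul, smul_eq_mul, mul_assoc]

lemma setIntegral_compl_ball_fun_norm (g : ℝ → ℝ) {ρ : ℝ} (hρ : 0 < ρ) :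
    ∫ y in (ball 0 ρ)ᶜ, g ‖y‖ ∂μ
      = finrank ℝ E * μ.real (ball 0 1) * ∫ r in Ioi ρ, r ^ (finrank ℝ E - 1) * g r := by
  rw [← integral_indicator measurableSet_ball.compl, compl_ball_zero_indicator_comp_norm,
    integral_fun_norm_addHaar μ, pow_smul_indicator, setIntegral_indicator measurableSet_Ici,
    inter_eq_right.2 (Ici_subset_Ioi.2 hρ), integral_Ici_eq_integral_Ioi, nsmul_eq_mul,
    smul_eq_mul, mul_assoc]

lemma integrableOn_compl_ball_fun_norm_iff {g : ℝ → ℝ} {ρ : ℝ} (hρ : 0 < ρ) :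
    IntegrableOn (fun y : E => g ‖y‖) (ball 0 ρ)ᶜ μ
      ↔ IntegrableOn (fun r => r ^ (finrank ℝ E - 1) * g r) (Ioi ρ) := by
  rw [← integrable_indicator_iff measurableSet_ball.compl, compl_ball_zero_indicator_comp_norm,
    integrable_fun_norm_addHaar μ, pow_smul_indicator, integrableOn_indicator_iff measurableSet_Ici,
    inter_eq_left.2 (Ici_subset_Ioi.2 hρ), integrableOn_Ici_iff_integrableOn_Ioi]

lemma setIntegral_ball_inv_norm_add_pow_le {c ρ : ℝ} (hc : 0 < c) (hρ : 0 ≤ ρ) :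
    ∫ y in ball 0 ρ, ((‖y‖ + c) ^ finrank ℝ E)⁻¹ ∂μ
      ≤ finrank ℝ E * μ.real (ball 0 1) * log ((ρ + c) / c) := by
  rw [setIntegral_ball_fun_norm μ (fun r => ((r + c) ^ finrank ℝ E)⁻¹),
    ← integral_Ioo_inv_add hc hρ]
  refine mul_le_mul_of_nonneg_left (integral_mono_of_nonneg ?_ (integrableOn_Ioo_inv_add hc ρ) ?_)
    (by positivity)
  · exact (ae_restrict_iff' measurableSet_Ioo).2 (ae_of_all _ fun r hr => by
      have := hr.1; positivity)
  · exact (ae_restrict_iff' measurableSet_Ioo).2 (ae_of_all _ fun r hr =>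
      pow_pred_mul_inv_add_pow_le hc hr.1.le finrank_pos)

lemma integrableOn_compl_ball_norm_rpow_neg {ρ p : ℝ} (hρ : 0 < ρ) (hp : finrank ℝ E < p) :
    IntegrableOn (fun y : E => ‖y‖ ^ (-p)) (ball 0 ρ)ᶜ μ := by
  rw [integrableOn_compl_ball_fun_norm_iff μ (g := fun r => r ^ (-p)) hρ]
  exact (integrableOn_Ioi_rpow_of_lt (a := finrank ℝ E - 1 - p) (by linarith) hρ).congr_fun
    (fun r hr => (pow_pred_mul_rpow_neg (hρ.trans hr) finrank_pos p).symm) measurableSet_Ioi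

lemma setIntegral_compl_ball_norm_rpow_neg {ρ p : ℝ} (hρ : 0 < ρ) (hp : finrank ℝ E < p) :
    ∫ y in (ball 0 ρ)ᶜ, ‖y‖ ^ (-p) ∂μ
      = finrank ℝ E * μ.real (ball 0 1) * (ρ ^ (finrank ℝ E - p) / (p - finrank ℝ E)) := by
  rw [setIntegral_compl_ball_fun_norm μ (fun r => r ^ (-p)) hρ,
    setIntegral_congr_fun measurableSet_Ioi fun r hr =>
      pow_pred_mul_rpow_neg (hρ.trans hr) finrank_pos p,
    integral_Ioi_rpow_of_lt (by linarith) hρ]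
  congr 1
  rw [show (finrank ℝ E : ℝ) - 1 - p + 1 = finrank ℝ E - p by ring, neg_div, ← div_neg, neg_sub]

lemma integral_inv_norm_sub_add_pow_mul_le_log {x : E} (hx : 0 < ‖x‖) {a b : ℝ} (ha : 0 < a)
    (hb : 0 < b) :
    ∫ y, ((‖x - y‖ + a) ^ finrank ℝ E)⁻¹ * ((‖y‖ + b) ^ finrank ℝ E)⁻¹ ∂μ
      ≤ ((‖x‖ / 2) ^ finrank ℝ E)⁻¹ * (finrank ℝ E * μ.real (ball 0 1)
          * (log ((‖x‖ / 2 + b) / b) + log ((3 * ‖x‖ + a) / a)))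
        + μ.real (ball 0 1) * (‖x‖ ^ finrank ℝ E)⁻¹ := by
  set d := finrank ℝ E
  set R := ‖x‖
  set k := ((R / 2) ^ d)⁻¹
  set F₁ := (ball (0 : E) (R / 2)).indicator fun y => ((‖y‖ + b) ^ d)⁻¹
  set F₂ := (ball (0 : E) (3 * R)).indicator fun z => ((‖z‖ + a) ^ d)⁻¹
  set F₃ := (ball (0 : E) (2 * R))ᶜ.indicator fun y => ‖y‖ ^ (-(2 * d : ℝ))
  have hd₀ : (0 : ℝ) < d := by exact_mod_cast finrank_pos
  have hd : (d : ℝ) < 2 * d := by linarith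
  have i₁ : Integrable F₁ μ :=
    (integrable_indicator_iff measurableSet_ball).2 (integrableOn_ball_inv_norm_add_pow μ hb d _)
  have i₂ : Integrable (fun y => F₂ (x - y)) μ :=
    ((integrable_indicator_iff measurableSet_ball).2
      (integrableOn_ball_inv_norm_add_pow μ ha d _)).comp_sub_left x
  have i₁₂ : Integrable (fun y => k * (F₁ y + F₂ (x - y))) μ := (i₁.add i₂).const_mul k
  have i₃ : Integrable (fun y => 2 ^ d * F₃ y) μ :=
    ((integrable_indicator_iff measurableSet_ball.compl).2
      (integrableOn_compl_ball_norm_rpow_neg μ (by positivity) hd)).const_mul _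
  have e₁ : ∫ y, F₁ y ∂μ ≤ d * μ.real (ball 0 1) * log ((R / 2 + b) / b) := by
    rw [integral_indicator measurableSet_ball]
    exact setIntegral_ball_inv_norm_add_pow_le μ hb (by positivity)
  have e₂ : ∫ y, F₂ (x - y) ∂μ ≤ d * μ.real (ball 0 1) * log ((3 * R + a) / a) := by
    rw [integral_sub_left_eq_self F₂ μ x, integral_indicator measurableSet_ball]
    exact setIntegral_ball_inv_norm_add_pow_le μ ha (by positivity)
  have e₃ : ∫ y, 2 ^ d * F₃ y ∂μ = μ.real (ball 0 1) * (R ^ d)⁻¹ := by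
    rw [integral_const_mul, integral_indicator measurableSet_ball.compl,
      setIntegral_compl_ball_norm_rpow_neg μ (by positivity) hd,
      show (d : ℝ) - 2 * d = -d by ring, show 2 * (d : ℝ) - d = d by ring,
      rpow_neg (by positivity), rpow_natCast]
    field_simp
    ring
  calc ∫ y, ((‖x - y‖ + a) ^ d)⁻¹ * ((‖y‖ + b) ^ d)⁻¹ ∂μ
      ≤ ∫ y, (k * (F₁ y + F₂ (x - y)) + 2 ^ d * F₃ y) ∂μ :=
        integral_mono_of_nonneg (ae_of_all _ fun y => by positivity) (i₁₂.add i₃)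
          (ae_of_all _ fun y => inv_norm_sub_add_pow_mul_le hx y ha.le hb.le d)
    _ = k * (∫ y, F₁ y ∂μ + ∫ y, F₂ (x - y) ∂μ) + μ.real (ball 0 1) * (R ^ d)⁻¹ := by
        rw [integral_add i₁₂ i₃, integral_const_mul, integral_add i₁ i₂, e₃]
    _ ≤ _ := by
        rw [mul_add (d * μ.real (ball 0 1))]
        gcongr

lemma integral_inv_norm_sub_add_pow_mul_le {x : E} (hx : 4 ≤ ‖x‖) {a b : ℝ} (ha : 0 < a)
    (ha1 : a ≤ 1) (hb : 0 < b) (hb1 : b ≤ 1) :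
    ∫ y, ((‖x - y‖ + a) ^ finrank ℝ E)⁻¹ * ((‖y‖ + b) ^ finrank ℝ E)⁻¹ ∂μ
      ≤ 2 ^ (finrank ℝ E + 2) * finrank ℝ E * μ.real (ball 0 1) * (‖x‖ ^ finrank ℝ E)⁻¹
        * (log ‖x‖ + a⁻¹ + b⁻¹) := by
  set d := finrank ℝ E
  set R := ‖x‖
  set V := μ.real (ball 0 1)
  refine (integral_inv_norm_sub_add_pow_mul_le_log μ (by linarith) ha hb).trans ?_
  have hL := log_div_add_log_div_le hx ha ha1 hb hb1
  have hlog := one_le_log_of_four_le hx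
  have hP : 0 ≤ 2 ^ d * d * V * (R ^ d)⁻¹ := by positivity
  have hone : V * (R ^ d)⁻¹ ≤ 2 ^ d * d * V * (R ^ d)⁻¹ * log R := by
    have h2d : (1 : ℝ) ≤ 2 ^ d := one_le_pow₀ one_le_two
    have hd : (1 : ℝ) ≤ d := by exact_mod_cast finrank_pos
    have : 1 ≤ 2 ^ d * d * log R := by nlinarith [one_le_mul_of_one_le_of_one_le h2d hd]
    nlinarith [mul_le_mul_of_nonneg_left this (by positivity : 0 ≤ V * (R ^ d)⁻¹)]
  rw [div_pow, inv_div, div_eq_mul_inv, pow_add]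
  nlinarith [mul_le_mul_of_nonneg_left hL hP, mul_nonneg hP (inv_pos.2 ha).le,
    mul_nonneg hP (inv_pos.2 hb).le, mul_nonneg hP (zero_le_one.trans hlog)]

end AddHaar

theorem stmt14 :
    ∃ C : ℝ, 0 < C ∧ ∀ x : E3, 8 < ‖x‖ →
      (∫ s in Set.Ioo (0:ℝ) 1, ∫ y : E3,
          ((‖x - y‖ + Real.sqrt (1 - s)) ^ 3)⁻¹ * ((‖y‖ + Real.sqrt s) ^ 3)⁻¹)
        ≤ C * ‖x‖ ^ (-(3:ℝ)) * Real.log ‖x‖ := by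
  set K := 2 ^ (3 + 2) * 3 * volume.real (ball (0 : E3) 1)
  set I := ∫ s in Ioo (0 : ℝ) 1, ((√(1 - s))⁻¹ + (√s)⁻¹)
  have hK : 0 < K := by
    have : 0 < volume.real (ball (0 : E3) 1) :=
      ENNReal.toReal_pos (measure_ball_pos _ _ one_pos).ne' measure_ball_lt_top.ne
    positivity
  have hI : 0 ≤ I := setIntegral_nonneg measurableSet_Ioo fun s _ => by positivity
  refine ⟨K * (1 + I), by positivity, fun x hx => ?_⟩
  have hlog := one_le_log_of_four_le (by linarith : 4 ≤ ‖x‖)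
  have hbound : ∀ s ∈ Ioo (0 : ℝ) 1, ∫ y : E3, ((‖x - y‖ + √(1 - s)) ^ 3)⁻¹ * ((‖y‖ + √s) ^ 3)⁻¹
      ≤ K * (‖x‖ ^ 3)⁻¹ * (log ‖x‖ + ((√(1 - s))⁻¹ + (√s)⁻¹)) := fun s hs => by
    have h := integral_inv_norm_sub_add_pow_mul_le volume (x := x) (by linarith)
      (sqrt_pos.2 (sub_pos.2 hs.2)) (sqrt_le_one.2 (by linarith [hs.1]))
      (sqrt_pos.2 hs.1) (sqrt_le_one.2 hs.2.le)
    rw [finrank_euclideanSpace_fin] at h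
    rwa [← add_assoc]
  have hconst : IntegrableOn (fun _ => log ‖x‖) (Ioo (0 : ℝ) 1) := integrableOn_const (by simp)
  calc ∫ s in Ioo (0 : ℝ) 1, ∫ y : E3, ((‖x - y‖ + √(1 - s)) ^ 3)⁻¹ * ((‖y‖ + √s) ^ 3)⁻¹
      ≤ ∫ s in Ioo (0 : ℝ) 1, K * (‖x‖ ^ 3)⁻¹ * (log ‖x‖ + ((√(1 - s))⁻¹ + (√s)⁻¹)) :=
        integral_mono_of_nonneg (ae_of_all _ fun s => integral_nonneg fun y => by positivity)
          ((hconst.add integrableOn_inv_sqrt_add_inv_sqrt_one_sub).const_mul _)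
          ((ae_restrict_iff' measurableSet_Ioo).2 (ae_of_all _ hbound))
    _ = K * (‖x‖ ^ 3)⁻¹ * (log ‖x‖ + I) := by
        rw [integral_const_mul, integral_add hconst integrableOn_inv_sqrt_add_inv_sqrt_one_sub,
          setIntegral_const]
        simp [I]
    _ ≤ K * (1 + I) * ‖x‖ ^ (-(3:ℝ)) * log ‖x‖ := by
        rw [rpow_neg (by positivity), show (3:ℝ) = (3:ℕ) by norm_num, rpow_natCast]
        have : 0 ≤ K * (‖x‖ ^ 3)⁻¹ := by positivity
        nlinarith [mul_le_mul_of_nonneg_left hlog (mul_nonneg this hI)]
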